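/- arXiv:1601.04826 — 3 statements merged into one kernel-verified Lean document; each statement's English description precedes it below -/
import Mathlib

section
/- Let p ≤ q be positive integers, Θ ⊆ ℝ^p, and L : Θ → ℝ^q a map that is a homeomorphism from Θ onto L(Θ). Let θ₀ be an interior point of Θ, assume L is twice continuously differentiable on a neighbourhood of θ₀ and that the q×p Jacobian matrix L̇(θ₀) has full rank p. Let Ω : Θ → ℝ^{q×q} take symmetric positive definite values with eigenvalues 0 < λ₁(θ) ≤ … ≤ λ_q(θ), be twice continuously differentiable on a neighbourhood of θ₀, continuous on Θ, and satisfy inf_{θ∈Θ} λ₁(θ) > 0. On a probability space let L̂_n : Ω' → ℝ^q (n ∈ ℕ) be random vectors converging in probability to L(θ₀), and set f_n(θ) = (L̂_n − L(θ))ᵀ Ω(θ) (L̂_n − L(θ)). Then for every ε > 0 the probability of the event that the set of minimizers of f_n over Θ is nonempty, consists of exactly one point θ̂_n, and satisfies ‖θ̂_n − θ₀‖ ≤ ε, tends to one as n → ∞. -/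
/-!
Write `g(θ, y) = (y - L θ)ᵀ Ω(θ) (y - L θ)`, so that `f_n = g(·, L̂_n)`. Since the residual
vanishes at `(θ₀, L θ₀)`, the Hessian of `g(·, L θ₀)` at `θ₀` is `2 L̇ᵀ Ω L̇`, which is
nondegenerate because `Ω(θ₀)` is positive definite and `L̇` has full rank. Hence the map
`(θ, y) ↦ ∂_θ g(θ, y)`, strictly differentiable at `(θ₀, L θ₀)`, is injective in `θ` near that
point, so for `y` near `L θ₀` the function `g(·, y)` has at most one local minimum near `θ₀`.

On the other hand `g(θ, y) ≥ λ₁ ‖y - L θ‖²` and `L` is a homeomorphism onto its image, so for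
`y` close to `L θ₀` every `θ ∈ Θ` with `g(θ, y) ≤ g(θ₀, y)` lies in a small ball around `θ₀`
inside the interior of `Θ`. A minimizer exists on the closed ball by compactness, it is a global
minimizer over `Θ`, and every global minimizer is a local minimum in the small ball, hence unique.
Finally, `L̂_n` lies in the required neighbourhood of `L θ₀` with probability tending to one.
-/

open MeasureTheory ProbabilityTheory Filter Matrix Topology
open scoped ENNReal NNReal RealInnerProductSpace

noncomputable section

/-- Convergence in distribution (weak convergence of the laws): the integrals of every
bounded continuous function converge. -/
def TendstoInDistribution {α E : Type*} [MeasurableSpace α] [MeasurableSpace E] [TopologicalSpace E]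
    (μ : Measure α) (X : ℕ → α → E) (ν : Measure E) : Prop :=
  ∀ g : BoundedContinuousFunction E ℝ,
    Tendsto (fun n => ∫ ω, g (X n ω) ∂μ) atTop (𝓝 (∫ x, g x ∂ν))

/-- `ν` is the centered Gaussian law on `ℝ^q` with covariance matrix `S`:
every linear marginal is a centered real Gaussian with the corresponding variance. -/
def IsCenteredGaussian {q : ℕ} (ν : Measure (EuclideanSpace ℝ (Fin q)))
    (S : Matrix (Fin q) (Fin q) ℝ) : Prop :=
  IsProbabilityMeasure ν ∧
    ∀ a : EuclideanSpace ℝ (Fin q),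
      ν.map (fun x => (inner ℝ a x : ℝ)) =
        gaussianReal 0 (Real.toNNReal (a ⬝ᵥ S.mulVec a))

/-- The chi-square distribution with `r` degrees of freedom, i.e. the Gamma distribution
with shape `r/2` and rate `1/2`. -/
def chiSquareMeasure (r : ℕ) : Measure ℝ := gammaMeasure ((r : ℝ) / 2) (1 / 2)

/-- The Jacobian matrix of a map `ℝ^p → ℝ^q` at a point. -/
def jacobianMatrix {p q : ℕ} (L : EuclideanSpace ℝ (Fin p) → EuclideanSpace ℝ (Fin q))
    (θ : EuclideanSpace ℝ (Fin p)) : Matrix (Fin q) (Fin p) ℝ :=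
  Matrix.of fun a i => fderiv ℝ (fun θ' => L θ' a) θ (EuclideanSpace.single i 1)

theorem exists_pos_forall_dist_lt_of_isInducing {X Y : Type*} [PseudoMetricSpace X]
    [PseudoMetricSpace Y] {f : X → Y} {s : Set X} (hf : IsInducing fun x : s => f x) {x₀ : X}
    (hx₀ : x₀ ∈ s) {ε : ℝ} (hε : 0 < ε) :
    ∃ δ > 0, ∀ x ∈ s, dist (f x) (f x₀) < δ → dist x x₀ < ε := by
  have hball : Metric.ball (⟨x₀, hx₀⟩ : s) ε ∈ 𝓝 ⟨x₀, hx₀⟩ := Metric.ball_mem_nhds _ hε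
  rw [hf.nhds_eq_comap, (Metric.nhds_basis_ball.comap _).mem_iff] at hball
  obtain ⟨δ, hδ, hsub⟩ := hball
  exact ⟨δ, hδ, fun x hx hfx => @hsub ⟨x, hx⟩ hfx⟩

theorem MeasureTheory.TendstoInMeasure.tendsto_measure_setOf_of_eventually {α E : Type*}
    [MeasurableSpace α] [PseudoMetricSpace E] {μ : Measure α} [IsProbabilityMeasure μ]
    {X : ℕ → α → E} {c : E} (hX : TendstoInMeasure μ X atTop fun _ => c) {P : E → Prop}
    (hP : ∀ᶠ y in 𝓝 c, P y) :
    Tendsto (fun n => μ {ω | P (X n ω)}) atTop (𝓝 1) := by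
  obtain ⟨δ, hδ, hball⟩ := Metric.eventually_nhds_iff.1 hP
  have hfar := tendstoInMeasure_iff_dist.1 hX δ hδ
  have hlow : ∀ n, 1 - μ {ω | δ ≤ dist (X n ω) c} ≤ μ {ω | P (X n ω)} := fun n => by
    rw [tsub_le_iff_right, ← measure_univ (μ := μ)]
    refine (measure_mono fun ω _ => ?_).trans (measure_union_le _ _)
    by_cases h : dist (X n ω) c < δ
    · exact Or.inl (hball h)
    · exact Or.inr (le_of_not_gt h)
  refine tendsto_of_tendsto_of_tendsto_of_le_of_le ?_ tendsto_const_nhds hlow fun n => prob_le_one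
  simpa using ENNReal.Tendsto.sub tendsto_const_nhds hfar (.inl ENNReal.one_ne_top)

section Minimizers

variable {X β : Type*} [LinearOrder β] [TopologicalSpace β] [ClosedIicTopology β] {s : Set X}
  {h : X → β} {x₀ : X}

theorem IsCompact.exists_isMinOn_of_sublevel_subset [TopologicalSpace X] {K : Set X}
    (hK : IsCompact K) (hx₀ : x₀ ∈ K) (hh : ContinuousOn h K)
    (hsub : ∀ x ∈ s, h x ≤ h x₀ → x ∈ K) : ∃ x ∈ K, IsMinOn h s x := by
  obtain ⟨x, hxK, hmin⟩ := hK.exists_isMinOn ⟨x₀, hx₀⟩ hh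
  refine ⟨x, hxK, fun y hy => ?_⟩
  by_cases hy₀ : h y ≤ h x₀
  · exact hmin (hsub y hy hy₀)
  · exact (hmin hx₀).trans (le_of_not_ge hy₀)

theorem exists_isMinOn_forall_isMinOn_eq [PseudoMetricSpace X] [ProperSpace X] {r : ℝ}
    (hr : 0 < r) (hrs : Metric.closedBall x₀ r ⊆ s) (hh : ContinuousOn h (Metric.closedBall x₀ r))
    (hsub : ∀ x ∈ s, h x ≤ h x₀ → x ∈ Metric.ball x₀ r)
    (huniq : ∀ x ∈ Metric.ball x₀ r, ∀ x' ∈ Metric.ball x₀ r,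
      IsLocalMin h x → IsLocalMin h x' → x = x') :
    ∃ x ∈ Metric.ball x₀ r, IsMinOn h s x ∧ ∀ x' ∈ s, IsMinOn h s x' → x' = x := by
  obtain ⟨x, hxK, hmin⟩ := (isCompact_closedBall x₀ r).exists_isMinOn_of_sublevel_subset
    (Metric.mem_closedBall_self hr.le) hh
    fun x hx hle => Metric.ball_subset_closedBall (hsub x hx hle)
  have hlocal : ∀ x' ∈ s, IsMinOn h s x' → x' ∈ Metric.ball x₀ r ∧ IsLocalMin h x' := by
    intro x' hx' hmin'
    have hball := hsub x' hx' (hmin' (hrs (Metric.mem_closedBall_self hr.le)))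
    exact ⟨hball, hmin'.isLocalMin <| mem_of_superset (Metric.isOpen_ball.mem_nhds hball)
      (Metric.ball_subset_closedBall.trans hrs)⟩
  obtain ⟨hxball, hxloc⟩ := hlocal x (hrs hxK) hmin
  refine ⟨x, hxball, hmin, fun x' hx' hmin' => ?_⟩
  obtain ⟨hx'ball, hx'loc⟩ := hlocal x' hx' hmin'
  exact huniq x' hx'ball x hxball hx'loc hxloc

end Minimizers

section LocalInjectivity

variable {𝕜 E F G : Type*} [NontriviallyNormedField 𝕜] [CompleteSpace 𝕜]
  [NormedAddCommGroup E] [NormedSpace 𝕜 E] [FiniteDimensional 𝕜 E]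
  [NormedAddCommGroup F] [NormedSpace 𝕜 F] [NormedAddCommGroup G] [NormedSpace 𝕜 G]

theorem HasStrictFDerivAt.exists_mem_nhds_eq_of_apply_eq {Φ : E × F → G} {Φ' : E × F →L[𝕜] G}
    {z₀ : E × F} (hΦ : HasStrictFDerivAt Φ Φ' z₀)
    (hinj : Function.Injective (Φ'.comp (ContinuousLinearMap.inl 𝕜 E F))) :
    ∃ s ∈ 𝓝 z₀, ∀ x x' y, (x, y) ∈ s → (x', y) ∈ s → Φ (x, y) = Φ (x', y) → x = x' := by
  set A := Φ'.comp (ContinuousLinearMap.inl 𝕜 E F)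
  obtain ⟨K, hK, hA⟩ := (A : E →ₗ[𝕜] G).injective_iff_antilipschitz.1 hinj
  have hK' : (0 : ℝ) < K := hK
  have hsmall := hΦ.isLittleO.def (c := (2 * K)⁻¹) (by positivity)
  rw [nhds_prod_eq] at hsmall
  obtain ⟨s, hs, hsub⟩ := mem_prod_self_iff.1 hsmall
  refine ⟨s, hs, fun x x' y hx hx' hxx' => ?_⟩
  have hclose := hsub (Set.mk_mem_prod hx hx')
  simp only [Set.mem_ofPred_eq, hxx', sub_self, zero_sub, norm_neg, Prod.mk_sub_mk,
    Prod.norm_mk, norm_zero, max_eq_left (norm_nonneg _)] at hclose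
  have hlow : ‖x - x'‖ ≤ K * ‖Φ' (x - x', 0)‖ := A.bound_of_antilipschitz hA _
  have : ‖x - x'‖ ≤ ‖x - x'‖ / 2 := by
    calc ‖x - x'‖ ≤ K * ‖Φ' (x - x', 0)‖ := hlow
      _ ≤ K * ((2 * (K : ℝ))⁻¹ * ‖x - x'‖) := by gcongr
      _ = ‖x - x'‖ / 2 := by field_simp
  exact sub_eq_zero.1 (norm_le_zero_iff.1 (by linarith [norm_nonneg (x - x')]))

end LocalInjectivity

section SecondDerivative

variable {E F : Type*} [NormedAddCommGroup E] [NormedSpace ℝ E] [NormedAddCommGroup F]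
  [NormedSpace ℝ F]

theorem ContDiffAt.eventually_hasFDerivAt {f : E → ℝ} {x : E} (hf : ContDiffAt ℝ 2 f x) :
    ∀ᶠ y in 𝓝 x, HasFDerivAt f (fderiv ℝ f y) y :=
  (hf.eventually (by simp)).mono fun _ hy => (hy.differentiableAt (by norm_num)).hasFDerivAt

theorem ContDiffAt.hasFDerivAt_fderiv {f : E → ℝ} {x : E} (hf : ContDiffAt ℝ 2 f x) :
    HasFDerivAt (fderiv ℝ f) (fderiv ℝ (fderiv ℝ f) x) x :=
  ((hf.fderiv_right (m := 1) le_rfl).differentiableAt one_ne_zero).hasFDerivAt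

theorem hasFDerivAt_fderiv_sum_mul_of_eq_zero {ι : Type*} [Fintype ι] {ρ σ : ι → E → ℝ} {x : E}
    (hρ : ∀ i, ContDiffAt ℝ 2 (ρ i) x) (hσ : ∀ i, ContDiffAt ℝ 2 (σ i) x)
    (hρx : ∀ i, ρ i x = 0) (hσx : ∀ i, σ i x = 0) :
    HasFDerivAt (fderiv ℝ fun y => ∑ i, ρ i y * σ i y)
      (∑ i, ((fderiv ℝ (ρ i) x).smulRight (fderiv ℝ (σ i) x) +
        (fderiv ℝ (σ i) x).smulRight (fderiv ℝ (ρ i) x))) x := by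
  have hderiv : (fderiv ℝ fun y => ∑ i, ρ i y * σ i y) =ᶠ[𝓝 x]
      fun y => ∑ i, (ρ i y • fderiv ℝ (σ i) y + σ i y • fderiv ℝ (ρ i) y) := by
    filter_upwards [eventually_all.2 fun i => (hρ i).eventually_hasFDerivAt,
      eventually_all.2 fun i => (hσ i).eventually_hasFDerivAt] with y hρy hσy
    exact (HasFDerivAt.fun_sum fun i _ => (hρy i).mul (hσy i)).fderiv
  have hsum := HasFDerivAt.fun_sum (u := Finset.univ) fun i _ =>
    ((hρ i).differentiableAt (by norm_num)).hasFDerivAt.smul (hσ i).hasFDerivAt_fderiv |>.add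
      (((hσ i).differentiableAt (by norm_num)).hasFDerivAt.smul (hρ i).hasFDerivAt_fderiv)
  simp only [hρx, hσx, zero_smul, zero_add] at hsum
  exact hsum.congr_of_eventuallyEq hderiv

theorem DifferentiableAt.hasFDerivAt_comp_prodMk_left {g : E × F → ℝ} {x : E} {y : F}
    (hg : DifferentiableAt ℝ g (x, y)) :
    HasFDerivAt (fun x' => g (x', y)) ((fderiv ℝ g (x, y)).comp (.inl ℝ E F)) x :=
  hg.hasFDerivAt.comp x (hasFDerivAt_prodMk_left x y)

theorem ContDiffAt.exists_mem_nhds_isLocalMin_eq [FiniteDimensional ℝ E] {g : E × F → ℝ}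
    {x₀ : E} {y₀ : F} (hg : ContDiffAt ℝ 2 g (x₀, y₀))
    (hH : Function.Injective (fderiv ℝ (fderiv ℝ fun x => g (x, y₀)) x₀)) :
    ∃ s ∈ 𝓝 (x₀, y₀), ∀ x x' y, (x, y) ∈ s → (x', y) ∈ s →
      IsLocalMin (fun x => g (x, y)) x → IsLocalMin (fun x => g (x, y)) x' → x = x' := by
  -- Local minima of `g (·, y)` are zeros of `Φ (·, y)`, whose `x`-derivative at `(x₀, y₀)` is
  -- the Hessian of `g (·, y₀)`.
  set Φ : E × F → E →L[ℝ] ℝ := fun z => (fderiv ℝ g z).comp (.inl ℝ E F)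
  set restrictInl := (ContinuousLinearMap.compL ℝ E (E × F) ℝ).flip (.inl ℝ E F)
  set Φ' := restrictInl.comp (fderiv ℝ (fderiv ℝ g) (x₀, y₀))
  have hΦ : HasStrictFDerivAt Φ Φ' (x₀, y₀) :=
    restrictInl.hasStrictFDerivAt.comp _
      ((hg.fderiv_right (m := 1) le_rfl).hasStrictFDerivAt one_ne_zero)
  have hdiff : ∀ᶠ z in 𝓝 (x₀, y₀), DifferentiableAt ℝ g z :=
    (hg.eventually (by simp)).mono fun z hz => hz.differentiableAt (by norm_num)
  have hHΦ : fderiv ℝ (fderiv ℝ fun x => g (x, y₀)) x₀ = Φ'.comp (.inl ℝ E F) := by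
    refine (hΦ.hasFDerivAt.comp x₀ (hasFDerivAt_prodMk_left x₀ y₀)
      |>.congr_of_eventuallyEq ?_).fderiv
    filter_upwards [(Continuous.prodMk_left y₀).continuousAt.eventually hdiff] with x hx
    exact hx.hasFDerivAt_comp_prodMk_left.fderiv
  obtain ⟨s, hs, hsΦ⟩ := hΦ.exists_mem_nhds_eq_of_apply_eq (hHΦ ▸ hH)
  refine ⟨s ∩ {z | DifferentiableAt ℝ g z}, inter_mem hs hdiff, ?_⟩
  rintro x x' y ⟨hx, hgx⟩ ⟨hx', hgx'⟩ hmin hmin'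
  refine hsΦ x x' y hx hx' ?_
  simp only [Φ]
  rw [hmin.hasFDerivAt_eq_zero hgx.hasFDerivAt_comp_prodMk_left,
    hmin'.hasFDerivAt_eq_zero hgx'.hasFDerivAt_comp_prodMk_left]

end SecondDerivative

theorem Matrix.mulVec_injective_of_rank_eq_card {m n K : Type*} [Fintype m] [Fintype n] [Field K]
    {M : Matrix m n K} (h : M.rank = Fintype.card n) : Function.Injective M.mulVec := by
  rw [← coe_mulVecLin, ← LinearMap.ker_eq_bot, ← Submodule.finrank_eq_zero]
  have := LinearMap.finrank_range_add_finrank_ker M.mulVecLin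
  rw [← Matrix.rank, h, Module.finrank_fintype_fun_eq_card] at this
  omega

theorem EuclideanSpace.dotProduct_self {n : ℕ} (x : EuclideanSpace ℝ (Fin n)) :
    ⇑x ⬝ᵥ ⇑x = ‖x‖ ^ 2 := by
  rw [← real_inner_self_eq_norm_sq, EuclideanSpace.inner_eq_star_dotProduct, star_trivial]

theorem jacobianMatrix_mulVec {p q : ℕ} (L : EuclideanSpace ℝ (Fin p) → EuclideanSpace ℝ (Fin q))
    (θ u : EuclideanSpace ℝ (Fin p)) (a : Fin q) :
    (jacobianMatrix L θ *ᵥ ⇑u) a = fderiv ℝ (fun θ' => L θ' a) θ u := by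
  conv_rhs => rw [← (EuclideanSpace.basisFun (Fin p) ℝ).sum_repr u]
  simp [jacobianMatrix, mulVec, dotProduct, mul_comm]

section WeightedLeastSquares

variable {p q : ℕ}

-- `f_n` with `L̂_n(ω)` replaced by a deterministic `y`
def wlsCriterion {E : Type*} (L : E → EuclideanSpace ℝ (Fin q))
    (Om : E → Matrix (Fin q) (Fin q) ℝ) (y : EuclideanSpace ℝ (Fin q)) (θ : E) : ℝ :=
  (fun a => y a - L θ a) ⬝ᵥ (Om θ).mulVec (fun a => y a - L θ a)

theorem mul_norm_sq_le_wlsCriterion {E : Type*} {L : E → EuclideanSpace ℝ (Fin q)}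
    {Om : E → Matrix (Fin q) (Fin q) ℝ} {lam : ℝ} {θ : E}
    (hlam : ∀ v : Fin q → ℝ, lam * (v ⬝ᵥ v) ≤ v ⬝ᵥ (Om θ).mulVec v)
    (y : EuclideanSpace ℝ (Fin q)) :
    lam * ‖y - L θ‖ ^ 2 ≤ wlsCriterion L Om y θ := by
  rw [← EuclideanSpace.dotProduct_self]
  exact hlam _

theorem contDiffAt_wlsCriterion {E : Type*} [NormedAddCommGroup E] [NormedSpace ℝ E]
    {L : E → EuclideanSpace ℝ (Fin q)} {Om : E → Matrix (Fin q) (Fin q) ℝ} {n : WithTop ℕ∞}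
    {θ : E} (hL : ContDiffAt ℝ n L θ) (hOm : ∀ a b, ContDiffAt ℝ n (fun θ => Om θ a b) θ)
    (y : EuclideanSpace ℝ (Fin q)) :
    ContDiffAt ℝ n (fun z : E × EuclideanSpace ℝ (Fin q) => wlsCriterion L Om z.2 z.1) (θ, y) := by
  have hres : ∀ a, ContDiffAt ℝ n
      (fun z : E × EuclideanSpace ℝ (Fin q) => z.2 a - L z.1 a) (θ, y) :=
    fun a => ((contDiffAt_piLp_apply 2).comp _ contDiffAt_snd).sub
      ((contDiffAt_euclidean.1 hL a).comp (θ, y) contDiffAt_fst :)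
  exact ContDiffAt.sum (s := Finset.univ) fun a _ => (hres a).mul <|
    ContDiffAt.sum (s := Finset.univ) fun b _ => ((hOm a b).comp _ contDiffAt_fst).mul (hres b)

theorem dist_lt_of_wlsCriterion_le {X : Type*} [PseudoMetricSpace X] {Θ : Set X}
    {L : X → EuclideanSpace ℝ (Fin q)} {Om : X → Matrix (Fin q) (Fin q) ℝ} {lam η r : ℝ} {θ₀ : X}
    (hlam_pos : 0 < lam) (hlam : ∀ θ ∈ Θ, ∀ v : Fin q → ℝ, lam * (v ⬝ᵥ v) ≤ v ⬝ᵥ (Om θ).mulVec v)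
    (hLη : ∀ θ ∈ Θ, dist (L θ) (L θ₀) < η → dist θ θ₀ < r) {y : EuclideanSpace ℝ (Fin q)}
    (hy : dist y (L θ₀) < η / 2) (hy₀ : wlsCriterion L Om y θ₀ < lam * (η / 2) ^ 2)
    {θ : X} (hθ : θ ∈ Θ) (hle : wlsCriterion L Om y θ ≤ wlsCriterion L Om y θ₀) :
    dist θ θ₀ < r := by
  have hclose : ‖y - L θ‖ < η / 2 := by
    have := (mul_norm_sq_le_wlsCriterion (hlam θ hθ) y).trans_lt (hle.trans_lt hy₀)
    exact lt_of_pow_lt_pow_left₀ 2 (dist_nonneg.trans_lt hy).le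
      (lt_of_mul_lt_mul_left this hlam_pos.le)
  refine hLη θ hθ ?_
  calc dist (L θ) (L θ₀) ≤ dist (L θ) y + dist y (L θ₀) := dist_triangle _ _ _
    _ < η / 2 + η / 2 := by
      gcongr
      rwa [dist_comm, dist_eq_norm]
    _ = η := add_halves η

theorem injective_fderiv_fderiv_wlsCriterion
    {L : EuclideanSpace ℝ (Fin p) → EuclideanSpace ℝ (Fin q)}
    {Om : EuclideanSpace ℝ (Fin p) → Matrix (Fin q) (Fin q) ℝ} {θ₀ : EuclideanSpace ℝ (Fin p)}
    (hL : ContDiffAt ℝ 2 L θ₀) (hOm : ∀ a b, ContDiffAt ℝ 2 (fun θ => Om θ a b) θ₀)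
    (hrank : (jacobianMatrix L θ₀).rank = p) (hpos : ∀ v ≠ 0, 0 < v ⬝ᵥ Om θ₀ *ᵥ v) :
    Function.Injective (fderiv ℝ (fderiv ℝ (wlsCriterion L Om (L θ₀))) θ₀) := by
  set ρ : Fin q → EuclideanSpace ℝ (Fin p) → ℝ := fun a θ => L θ₀ a - L θ a
  set σ : Fin q → EuclideanSpace ℝ (Fin p) → ℝ := fun a θ => ∑ b, Om θ a b * ρ b θ
  have hρ : ∀ a, ContDiffAt ℝ 2 (ρ a) θ₀ := fun a =>
    contDiffAt_const.sub (contDiffAt_euclidean.1 hL a)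
  have hσ : ∀ a, ContDiffAt ℝ 2 (σ a) θ₀ := fun a =>
    ContDiffAt.sum fun b _ => (hOm a b).mul (hρ b)
  have hρ₀ : ∀ a, ρ a θ₀ = 0 := fun a => sub_self _
  have hσ₀ : ∀ a, σ a θ₀ = 0 := fun a => by simp [σ, hρ₀]
  have hσ' : ∀ a u, fderiv ℝ (σ a) θ₀ u = ∑ b, Om θ₀ a b * fderiv ℝ (ρ b) θ₀ u := fun a u => by
    have : HasFDerivAt (σ a) _ θ₀ := HasFDerivAt.fun_sum (u := Finset.univ) fun b _ =>
      ((hOm a b).differentiableAt (by norm_num)).hasFDerivAt.mul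
        ((hρ b).differentiableAt (by norm_num)).hasFDerivAt
    simp [this.fderiv, hρ₀]
  change Function.Injective (fderiv ℝ (fderiv ℝ fun θ => ∑ a, ρ a θ * σ a θ) θ₀)
  rw [(hasFDerivAt_fderiv_sum_mul_of_eq_zero hρ hσ hρ₀ hσ₀).fderiv, injective_iff_map_eq_zero]
  intro u hu
  set w : Fin q → ℝ := fun a => fderiv ℝ (ρ a) θ₀ u
  have hquad := congrArg (· u) hu
  simp only [_root_.sum_apply, _root_.add_apply, ContinuousLinearMap.smulRight_apply, hσ',
    _root_.smul_apply, smul_eq_mul, _root_.zero_apply] at hquad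
  have hw : w = 0 := by
    by_contra hw
    have : 2 * (w ⬝ᵥ Om θ₀ *ᵥ w) = 0 := by
      rw [← hquad, dotProduct, Finset.mul_sum]
      refine Finset.sum_congr rfl fun a _ => ?_
      simp only [mulVec, dotProduct, w]
      ring
    linarith [hpos w hw]
  have hJ : jacobianMatrix L θ₀ *ᵥ ⇑u = jacobianMatrix L θ₀ *ᵥ 0 := by
    ext a
    have := congrFun hw a
    simp only [w, ρ, fderiv_const_sub] at this
    simpa [jacobianMatrix_mulVec] using this
  exact (WithLp.ofLp_injective 2).eq_iff.1
    (mulVec_injective_of_rank_eq_card (by simpa using hrank) hJ)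

theorem eventually_exists_unique_isMinOn_wlsCriterion {Θ : Set (EuclideanSpace ℝ (Fin p))}
    {L : EuclideanSpace ℝ (Fin p) → EuclideanSpace ℝ (Fin q)}
    (hLind : IsInducing fun θ : Θ => L θ) {θ₀ : EuclideanSpace ℝ (Fin p)} (hθ₀ : Θ ∈ 𝓝 θ₀)
    (hL : ∀ᶠ θ in 𝓝 θ₀, ContDiffAt ℝ 2 L θ) (hrank : (jacobianMatrix L θ₀).rank = p)
    {Om : EuclideanSpace ℝ (Fin p) → Matrix (Fin q) (Fin q) ℝ}
    (hOm : ∀ᶠ θ in 𝓝 θ₀, ∀ a b, ContDiffAt ℝ 2 (fun θ => Om θ a b) θ)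
    (hpos : ∀ v ≠ 0, 0 < v ⬝ᵥ Om θ₀ *ᵥ v) {lam : ℝ} (hlam_pos : 0 < lam)
    (hlam : ∀ θ ∈ Θ, ∀ v : Fin q → ℝ, lam * (v ⬝ᵥ v) ≤ v ⬝ᵥ (Om θ).mulVec v)
    {ε : ℝ} (hε : 0 < ε) :
    ∀ᶠ y in 𝓝 (L θ₀), ∃ θhat ∈ Θ, IsMinOn (wlsCriterion L Om y) Θ θhat ∧
      (∀ θ' ∈ Θ, IsMinOn (wlsCriterion L Om y) Θ θ' → θ' = θhat) ∧ ‖θhat - θ₀‖ ≤ ε := by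
  set g : EuclideanSpace ℝ (Fin p) × EuclideanSpace ℝ (Fin q) → ℝ :=
    fun z => wlsCriterion L Om z.2 z.1
  have hgood : ∀ᶠ θ in 𝓝 θ₀, θ ∈ Θ ∧ ∀ y, ContDiffAt ℝ 2 g (θ, y) :=
    ((show ∀ᶠ θ in 𝓝 θ₀, θ ∈ Θ from hθ₀).and (hL.and hOm)).mono
      fun θ ⟨hΘ, hLθ, hOmθ⟩ => ⟨hΘ, contDiffAt_wlsCriterion hLθ hOmθ⟩
  obtain ⟨s, hs, huniq⟩ := (hgood.self_of_nhds.2 (L θ₀)).exists_mem_nhds_isLocalMin_eq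
    (injective_fderiv_fderiv_wlsCriterion hL.self_of_nhds hOm.self_of_nhds hrank hpos)
  obtain ⟨r₁, hr₁, hr₁s⟩ := Metric.mem_nhds_iff.1 hs
  obtain ⟨r₂, hr₂, hr₂good⟩ := Metric.nhds_basis_closedBall.mem_iff.1 hgood
  set r := min (min r₁ r₂) ε
  have hr : 0 < r := lt_min (lt_min hr₁ hr₂) hε
  have hrr₁ : r ≤ r₁ := (min_le_left _ _).trans (min_le_left _ _)
  have hKgood : Metric.closedBall θ₀ r ⊆ {θ | θ ∈ Θ ∧ ∀ y, ContDiffAt ℝ 2 g (θ, y)} :=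
    (Metric.closedBall_subset_closedBall ((min_le_left _ _).trans (min_le_right _ _))).trans
      hr₂good
  obtain ⟨η, hη, hLη⟩ := exists_pos_forall_dist_lt_of_isInducing hLind hgood.self_of_nhds.1 hr
  have hcont : ContinuousAt (fun y => g (θ₀, y)) (L θ₀) :=
    ((hgood.self_of_nhds.2 (L θ₀)).continuousAt).comp (Continuous.prodMk_right θ₀).continuousAt
  have hg₀ : g (θ₀, L θ₀) = 0 := by simp [g, wlsCriterion]
  filter_upwards [Metric.ball_mem_nhds (L θ₀) (lt_min hr (half_pos hη)),
    hcont.eventually (eventually_lt_nhds (b := lam * (η / 2) ^ 2) (by simp only [hg₀]; positivity))]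
    with y hy hgy
  obtain ⟨θhat, hθhat, hmin, hunique⟩ := exists_isMinOn_forall_isMinOn_eq hr
    (fun θ hθ => (hKgood hθ).1)
    (fun θ hθ => (ContinuousAt.comp (g := g) (f := fun θ => (θ, y))
      ((hKgood hθ).2 y).continuousAt (Continuous.prodMk_left y).continuousAt).continuousWithinAt)
    (fun θ hθ hle => dist_lt_of_wlsCriterion_le hlam_pos hlam hLη
      ((Metric.mem_ball.1 hy).trans_le (min_le_right _ _)) hgy hθ hle)
    fun θ hθ θ' hθ' hloc hloc' => by
      have hys : ∀ x ∈ Metric.ball θ₀ r, (x, y) ∈ s := fun x hx => hr₁s <| by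
        rw [← ball_prod_same]
        exact ⟨Metric.ball_subset_ball hrr₁ hx,
          Metric.ball_subset_ball ((min_le_left _ _).trans hrr₁) hy⟩
      exact huniq θ θ' y (hys θ hθ) (hys θ' hθ') hloc hloc'
  refine ⟨θhat, (hKgood (Metric.ball_subset_closedBall hθhat)).1, hmin, hunique, ?_⟩
  rw [← dist_eq_norm]
  exact (Metric.mem_ball.1 hθhat).le.trans (min_le_right _ _)

end WeightedLeastSquares

theorem stmt0_general {p q : ℕ}
    (Θ : Set (EuclideanSpace ℝ (Fin p)))
    (L : EuclideanSpace ℝ (Fin p) → EuclideanSpace ℝ (Fin q))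
    -- `L` is a homeomorphism from `Θ` onto `L(Θ)`
    (hLhomeo : Topology.IsEmbedding (fun θ : Θ => L θ))
    (θ₀ : EuclideanSpace ℝ (Fin p)) (hθ₀ : θ₀ ∈ interior Θ)
    -- `L` is twice continuously differentiable on a neighbourhood of `θ₀`
    (hLC2 : ∃ U ∈ 𝓝 θ₀, ContDiffOn ℝ 2 L U)
    -- the Jacobian `L̇(θ₀)` has full rank `p`
    (hrank : (jacobianMatrix L θ₀).rank = p)
    (Om : EuclideanSpace ℝ (Fin p) → Matrix (Fin q) (Fin q) ℝ)
    -- `Ω(θ)` is symmetric positive definite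
    (hOmPD : ∀ θ ∈ Θ, (Om θ).PosDef)
    -- `Ω` is twice continuously differentiable on a neighbourhood of `θ₀`
    (hOmC2 : ∃ U ∈ 𝓝 θ₀, ∀ a b : Fin q, ContDiffOn ℝ 2 (fun θ => Om θ a b) U)
    -- `inf_{θ∈Θ} λ₁(θ) > 0`: a uniform positive lower bound on the Rayleigh quotients
    (lam1 : ℝ) (hlam1pos : 0 < lam1)
    (hlam1 : ∀ θ ∈ Θ, ∀ v : Fin q → ℝ, lam1 * (v ⬝ᵥ v) ≤ v ⬝ᵥ (Om θ).mulVec v)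
    -- a probability space carrying the random vectors `L̂_n`
    {α : Type*} [MeasurableSpace α] (μ : Measure α) [IsProbabilityMeasure μ]
    (Lhat : ℕ → α → EuclideanSpace ℝ (Fin q))
    -- `L̂_n → L(θ₀)` in probability
    (hprob : TendstoInMeasure μ Lhat atTop (fun _ => L θ₀))
    -- the criterion function `f_n(θ) = (L̂_n − L(θ))ᵀ Ω(θ) (L̂_n − L(θ))`
    (f : ℕ → α → EuclideanSpace ℝ (Fin p) → ℝ)
    (hf : ∀ n ω θ, f n ω θ =
      (fun a => Lhat n ω a - L θ a) ⬝ᵥ (Om θ).mulVec (fun a => Lhat n ω a - L θ a)) :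
    -- the probability that `f_n` has a unique minimizer over `Θ`, lying within `ε` of `θ₀`,
    -- tends to one
    ∀ ε > (0 : ℝ),
      Tendsto (fun n => μ {ω | ∃ θhat ∈ Θ, IsMinOn (f n ω) Θ θhat ∧
          (∀ θ' ∈ Θ, IsMinOn (f n ω) Θ θ' → θ' = θhat) ∧ ‖θhat - θ₀‖ ≤ ε})
        atTop (𝓝 1) := by
  intro ε hε
  obtain ⟨UL, hUL, hLU⟩ := hLC2
  obtain ⟨UΩ, hUΩ, hOmU⟩ := hOmC2
  obtain rfl : f = fun n ω => wlsCriterion L Om (Lhat n ω) := by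
    funext n ω θ
    exact hf n ω θ
  exact hprob.tendsto_measure_setOf_of_eventually <|
    eventually_exists_unique_isMinOn_wlsCriterion hLhomeo.isInducing
      (mem_interior_iff_mem_nhds.1 hθ₀)
      ((eventually_mem_nhds_iff.2 hUL).mono fun θ hθ => hLU.contDiffAt hθ) hrank
      ((eventually_mem_nhds_iff.2 hUΩ).mono fun θ hθ a b => (hOmU a b).contDiffAt hθ)
      (fun v hv => by simpa using (hOmPD θ₀ (interior_subset hθ₀)).dotProduct_mulVec_pos hv)
      hlam1pos hlam1 hε

/-- Existence, uniqueness and consistency of the continuous updating weighted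
least squares estimator. -/
theorem stmt0 {p q : ℕ} (hp : 0 < p) (hpq : p ≤ q)
    (Θ : Set (EuclideanSpace ℝ (Fin p)))
    (L : EuclideanSpace ℝ (Fin p) → EuclideanSpace ℝ (Fin q))
    -- `L` is a homeomorphism from `Θ` onto `L(Θ)`
    (hLhomeo : Topology.IsEmbedding (fun θ : Θ => L θ))
    (θ₀ : EuclideanSpace ℝ (Fin p)) (hθ₀ : θ₀ ∈ interior Θ)
    -- `L` is twice continuously differentiable on a neighbourhood of `θ₀`
    (hLC2 : ∃ U ∈ 𝓝 θ₀, ContDiffOn ℝ 2 L U)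
    -- the Jacobian `L̇(θ₀)` has full rank `p`
    (hrank : (jacobianMatrix L θ₀).rank = p)
    (Om : EuclideanSpace ℝ (Fin p) → Matrix (Fin q) (Fin q) ℝ)
    -- `Ω(θ)` is symmetric positive definite
    (hOmPD : ∀ θ ∈ Θ, (Om θ).PosDef)
    -- `Ω` is twice continuously differentiable on a neighbourhood of `θ₀`
    (hOmC2 : ∃ U ∈ 𝓝 θ₀, ∀ a b : Fin q, ContDiffOn ℝ 2 (fun θ => Om θ a b) U)
    -- `Ω` is continuous on `Θ`
    (hOmCont : ∀ a b : Fin q, ContinuousOn (fun θ => Om θ a b) Θ)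
    -- `inf_{θ∈Θ} λ₁(θ) > 0`: a uniform positive lower bound on the Rayleigh quotients
    (lam1 : ℝ) (hlam1pos : 0 < lam1)
    (hlam1 : ∀ θ ∈ Θ, ∀ v : Fin q → ℝ, lam1 * (v ⬝ᵥ v) ≤ v ⬝ᵥ (Om θ).mulVec v)
    -- a probability space carrying the random vectors `L̂_n`
    {α : Type*} [MeasurableSpace α] (μ : Measure α) [IsProbabilityMeasure μ]
    (Lhat : ℕ → α → EuclideanSpace ℝ (Fin q))
    (hLhatMeas : ∀ n, Measurable (Lhat n))
    -- `L̂_n → L(θ₀)` in probability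
    (hprob : TendstoInMeasure μ Lhat atTop (fun _ => L θ₀))
    -- the criterion function `f_n(θ) = (L̂_n − L(θ))ᵀ Ω(θ) (L̂_n − L(θ))`
    (f : ℕ → α → EuclideanSpace ℝ (Fin p) → ℝ)
    (hf : ∀ n ω θ, f n ω θ =
      (fun a => Lhat n ω a - L θ a) ⬝ᵥ (Om θ).mulVec (fun a => Lhat n ω a - L θ a)) :
    -- the probability that `f_n` has a unique minimizer over `Θ`, lying within `ε` of `θ₀`,
    -- tends to one
    ∀ ε > (0 : ℝ),
      Tendsto (fun n => μ {ω | ∃ θhat ∈ Θ, IsMinOn (f n ω) Θ θhat ∧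
          (∀ θ' ∈ Θ, IsMinOn (f n ω) Θ θ' → θ' = θhat) ∧ ‖θhat - θ₀‖ ≤ ε})
        atTop (𝓝 1) :=
  stmt0_general Θ L hLhomeo θ₀ hθ₀ hLC2 hrank Om hOmPD hOmC2 lam1 hlam1pos hlam1 μ Lhat hprob f hf
end
end

section
/- Let p ≤ q be positive integers, Θ ⊆ ℝ^p, and L : Θ → ℝ^q a continuous injective map whose inverse is continuous on L(Θ). Let Ω : Θ → ℝ^{q×q} be continuous with symmetric positive definite values with eigenvalues 0 < λ₁(θ) ≤ … ≤ λ_q(θ) and λ₁ := inf_{θ∈Θ} λ₁(θ) > 0. Let θ₀ ∈ Θ and ε₀ > 0 be such that the closed ball B_{ε₀}(θ₀) is contained in Θ. Fix ε ∈ (0, ε₀] and let δ > 0 be such that for all θ ∈ Θ, ‖L(θ) − L(θ₀)‖ ≤ δ implies ‖θ − θ₀‖ ≤ ε. Then for every x ∈ ℝ^q with ‖x − L(θ₀)‖ < δ√λ₁ / ((1 + √λ₁) · max(1, √(λ_q(θ₀)))), the set of minimizers over Θ of f_x(θ) := (x − L(θ))ᵀ Ω(θ) (x − L(θ)) is nonempty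 and contained in B_ε(θ₀); in particular inf over {θ : ‖θ−θ₀‖ > ε} of √(f_x(θ)) is strictly larger than the minimum of √(f_x(θ)) over {θ : ‖θ−θ₀‖ ≤ ε}. -/
open Matrix Topology Filter

noncomputable section

/-- deterministic localization step in the consistency proof: if `x` is close
enough to `L(θ₀)`, the set of minimizers of `f_x(θ) = (x − L(θ))ᵀ Ω(θ) (x − L(θ))` over `Θ`
is nonempty and contained in the closed ball `B_ε(θ₀)`; in particular the infimum of
`√f_x` outside that ball is strictly larger than its minimum over the ball. Here `lam1`
is a positive uniform lower bound for the Rayleigh quotients of `Ω(θ)` on `Θ` (the paper's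
`λ₁ = inf_θ λ₁(θ)`), and `lamq` an upper bound for the Rayleigh quotient of `Ω(θ₀)`
(the paper's largest eigenvalue `λ_q(θ₀)`). -/
theorem stmt1 {p q : ℕ} (hp : 0 < p) (hpq : p ≤ q)
    (Θ : Set (EuclideanSpace ℝ (Fin p)))
    (L : EuclideanSpace ℝ (Fin p) → EuclideanSpace ℝ (Fin q))
    -- `L` is continuous and injective with continuous inverse on `L(Θ)`
    (hLhomeo : Topology.IsEmbedding (fun θ : Θ => L θ))
    (Om : EuclideanSpace ℝ (Fin p) → Matrix (Fin q) (Fin q) ℝ)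
    (hOmPD : ∀ θ ∈ Θ, (Om θ).PosDef)
    (hOmCont : ∀ a b : Fin q, ContinuousOn (fun θ => Om θ a b) Θ)
    (lam1 : ℝ) (hlam1pos : 0 < lam1)
    (hlam1 : ∀ θ ∈ Θ, ∀ v : Fin q → ℝ, lam1 * (v ⬝ᵥ v) ≤ v ⬝ᵥ (Om θ).mulVec v)
    (θ₀ : EuclideanSpace ℝ (Fin p)) (ε₀ : ℝ) (hε₀ : 0 < ε₀)
    (hball : Metric.closedBall θ₀ ε₀ ⊆ Θ)
    (lamq : ℝ)
    (hlamq : ∀ v : Fin q → ℝ, v ⬝ᵥ (Om θ₀).mulVec v ≤ lamq * (v ⬝ᵥ v))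
    (ε : ℝ) (hε : 0 < ε) (hεε₀ : ε ≤ ε₀)
    (δ : ℝ) (hδpos : 0 < δ)
    (hδ : ∀ θ ∈ Θ, ‖L θ - L θ₀‖ ≤ δ → ‖θ - θ₀‖ ≤ ε)
    (x : EuclideanSpace ℝ (Fin q))
    (hx : ‖x - L θ₀‖ <
      δ * Real.sqrt lam1 / ((1 + Real.sqrt lam1) * max 1 (Real.sqrt lamq)))
    (fx : EuclideanSpace ℝ (Fin p) → ℝ)
    (hfx : ∀ θ, fx θ =
      (fun a => x a - L θ a) ⬝ᵥ (Om θ).mulVec (fun a => x a - L θ a)) :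
    ({θ ∈ Θ | IsMinOn fx Θ θ}).Nonempty ∧
    {θ ∈ Θ | IsMinOn fx Θ θ} ⊆ Metric.closedBall θ₀ ε ∧
    -- the infimum of `√f_x` on `{θ ∈ Θ : ‖θ−θ₀‖ > ε}` is strictly larger than the
    -- minimum of `√f_x` on `{θ ∈ Θ : ‖θ−θ₀‖ ≤ ε}`, attained at some `θ₂`
    ∃ θ₂ ∈ Θ, ‖θ₂ - θ₀‖ ≤ ε ∧
      (∀ θ ∈ Θ, ‖θ - θ₀‖ ≤ ε → Real.sqrt (fx θ₂) ≤ Real.sqrt (fx θ)) ∧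
      ENNReal.ofReal (Real.sqrt (fx θ₂)) <
        ⨅ θ : {θ : EuclideanSpace ℝ (Fin p) // θ ∈ Θ ∧ ε < ‖θ - θ₀‖},
          ENNReal.ofReal (Real.sqrt (fx θ)) := by
  have hθ₀Θ : θ₀ ∈ Θ := hball (Metric.mem_closedBall_self hε₀.le)
  have hKsub : Metric.closedBall θ₀ ε ⊆ Θ :=
    (Metric.closedBall_subset_closedBall hεε₀).trans hball
  set η := ‖x - L θ₀‖ with hηdef
  have hη0 : (0:ℝ) ≤ η := norm_nonneg _
  set M := max 1 (Real.sqrt lamq) with hMdef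
  have hM1 : (1:ℝ) ≤ M := le_max_left _ _
  have hsl1 : 0 < Real.sqrt lam1 := Real.sqrt_pos.2 hlam1pos
  -- arithmetic
  have harith : (M + Real.sqrt lam1) * η < Real.sqrt lam1 * δ := by
    have h1 : 0 < (1 + Real.sqrt lam1) * M := by positivity
    have h2 : η * ((1 + Real.sqrt lam1) * M) < δ * Real.sqrt lam1 :=
      (lt_div_iff₀ h1).1 hx
    nlinarith [mul_le_mul_of_nonneg_left hM1 (mul_nonneg hsl1.le hη0)]
  have hδη : η < δ := by nlinarith
  -- dot product as norm
  have hdot : ∀ θ, (fun a => x a - L θ a) ⬝ᵥ (fun a => x a - L θ a)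
      = ‖x - L θ‖ ^ 2 := by
    intro θ
    rw [EuclideanSpace.norm_eq, Real.sq_sqrt (by positivity)]
    simp [dotProduct, sq]
  -- lower bound
  have hlow : ∀ θ ∈ Θ, Real.sqrt lam1 * ‖x - L θ‖ ≤ Real.sqrt (fx θ) := by
    intro θ hθ
    have h1 : lam1 * ‖x - L θ‖ ^ 2 ≤ fx θ := by
      rw [hfx, ← hdot θ]; exact hlam1 θ hθ _
    calc Real.sqrt lam1 * ‖x - L θ‖
        = Real.sqrt (lam1 * ‖x - L θ‖ ^ 2) := by
          rw [Real.sqrt_mul hlam1pos.le, Real.sqrt_sq (norm_nonneg _)]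
      _ ≤ Real.sqrt (fx θ) := Real.sqrt_le_sqrt h1
  have hfx_nonneg : ∀ θ ∈ Θ, 0 ≤ fx θ := by
    intro θ hθ
    have h1 : lam1 * ‖x - L θ‖ ^ 2 ≤ fx θ := by
      rw [hfx, ← hdot θ]; exact hlam1 θ hθ _
    nlinarith [norm_nonneg (x - L θ), sq_nonneg ‖x - L θ‖]
  -- upper bound at θ₀
  have hupper : Real.sqrt (fx θ₀) ≤ M * η := by
    have h1 : fx θ₀ ≤ lamq * η ^ 2 := by
      rw [hfx, hηdef, ← hdot θ₀]; exact hlamq _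
    calc Real.sqrt (fx θ₀) ≤ Real.sqrt (lamq * η ^ 2) := Real.sqrt_le_sqrt h1
      _ = Real.sqrt lamq * η := by
          rw [Real.sqrt_mul' _ (sq_nonneg η), Real.sqrt_sq hη0]
      _ ≤ M * η := mul_le_mul_of_nonneg_right (le_max_right _ _) hη0
  set c := Real.sqrt lam1 * (δ - η) with hcdef
  have hcpos : 0 < c := mul_pos hsl1 (by linarith)
  have hkey : Real.sqrt (fx θ₀) < c := by
    rw [hcdef]; nlinarith
  -- outside bound
  have houtside : ∀ θ ∈ Θ, ε < ‖θ - θ₀‖ → c ≤ Real.sqrt (fx θ) := by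
    intro θ hθ hθε
    have hLd : δ < ‖L θ - L θ₀‖ := by
      by_contra h
      exact absurd (hδ θ hθ (not_lt.1 h)) (not_le.2 hθε)
    have htri : ‖L θ - L θ₀‖ ≤ ‖x - L θ‖ + η := by
      calc ‖L θ - L θ₀‖ = ‖(L θ - x) + (x - L θ₀)‖ := by abel_nf
        _ ≤ ‖L θ - x‖ + ‖x - L θ₀‖ := norm_add_le _ _
        _ = ‖x - L θ‖ + η := by rw [norm_sub_rev]
    have h2 : δ - η ≤ ‖x - L θ‖ := by linarith
    calc c ≤ Real.sqrt lam1 * ‖x - L θ‖ :=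
          mul_le_mul_of_nonneg_left h2 hsl1.le
      _ ≤ Real.sqrt (fx θ) := hlow θ hθ
  have hout' : ∀ θ ∈ Θ, ε < ‖θ - θ₀‖ → fx θ₀ < fx θ := by
    intro θ hθ hθε
    have h1 : Real.sqrt (fx θ₀) < Real.sqrt (fx θ) :=
      lt_of_lt_of_le hkey (houtside θ hθ hθε)
    by_contra h
    exact absurd (Real.sqrt_le_sqrt (not_lt.1 h)) (not_le.2 h1)
  -- continuity of fx on Θ
  have hLcont : ContinuousOn L Θ := continuousOn_iff_continuous_restrict.2 hLhomeo.continuous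
  have hLa : ∀ a : Fin q, ContinuousOn (fun θ => L θ a) Θ := fun a =>
    (EuclideanSpace.proj a).continuous.comp_continuousOn hLcont
  have hfxcont : ContinuousOn fx Θ := by
    have hrw : fx = fun θ => ∑ a, ∑ b, (x a - L θ a) * (Om θ a b * (x b - L θ b)) := by
      funext θ
      rw [hfx]
      simp [dotProduct, mulVec, Finset.mul_sum]
    rw [hrw]
    apply continuousOn_finset_sum
    intro a _
    apply continuousOn_finset_sum
    intro b _
    exact ((continuousOn_const.sub (hLa a)).mul
      ((hOmCont a b).mul (continuousOn_const.sub (hLa b))))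
  -- minimizer on the closed ball
  obtain ⟨θ₂, hθ₂K, hθ₂min⟩ := (isCompact_closedBall θ₀ ε).exists_isMinOn
    ⟨θ₀, Metric.mem_closedBall_self hε.le⟩ (hfxcont.mono hKsub)
  have hθ₂Θ : θ₂ ∈ Θ := hKsub hθ₂K
  have hθ₂θ₀ : fx θ₂ ≤ fx θ₀ := hθ₂min (Metric.mem_closedBall_self hε.le)
  have hmem_ball : ∀ θ : EuclideanSpace ℝ (Fin p), ‖θ - θ₀‖ ≤ ε ↔
      θ ∈ Metric.closedBall θ₀ ε := by
    intro θ; rw [Metric.mem_closedBall, dist_eq_norm]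
  have hglobal : IsMinOn fx Θ θ₂ := by
    rw [isMinOn_iff]
    intro θ hθ
    rcases le_or_gt ‖θ - θ₀‖ ε with h | h
    · exact hθ₂min ((hmem_ball θ).1 h)
    · exact le_of_lt (lt_of_le_of_lt hθ₂θ₀ (hout' θ hθ h))
  refine ⟨⟨θ₂, hθ₂Θ, hglobal⟩, ?_, θ₂, hθ₂Θ, (hmem_ball θ₂).2 hθ₂K, ?_, ?_⟩
  · rintro θ ⟨hθ, hθmin⟩
    rw [← hmem_ball]
    by_contra h
    have h1 : fx θ₀ < fx θ := hout' θ hθ (not_le.1 h)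
    have h2 : fx θ ≤ fx θ₀ := (isMinOn_iff.1 hθmin) θ₀ hθ₀Θ
    linarith
  · intro θ hθ hθε
    exact Real.sqrt_le_sqrt (hθ₂min ((hmem_ball θ).1 hθε))
  · have hc2 : Real.sqrt (fx θ₂) < c :=
      lt_of_le_of_lt (Real.sqrt_le_sqrt hθ₂θ₀) hkey
    refine lt_of_lt_of_le ((ENNReal.ofReal_lt_ofReal_iff hcpos).2 hc2) (le_iInf ?_)
    rintro ⟨θ, hθ, hθε⟩
    exact ENNReal.ofReal_le_ofReal (houtside θ hθ hθε)
end
end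

section
/- Let p < q be positive integers, Σ ∈ ℝ^{q×q} symmetric positive definite, L̇ ∈ ℝ^{q×p} of full rank p, P = L̇(L̇ᵀΣ⁻¹L̇)⁻¹L̇ᵀΣ⁻¹, and Q = I_q − P. Let Q Σ Qᵀ = V diag(ν₁,…,ν_q) Vᵀ be a spectral decomposition with V orthogonal and ν₁ ≥ … ≥ ν_q ≥ 0, set s = q − p (so that ν_s > 0 and ν_j = 0 for j > s), and let A = V_s diag(ν₁,…,ν_s)⁻¹ V_sᵀ, where V_s consists of the first s columns of V. Then Qᵀ (Σ⁻¹ − A) Q = 0. -/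
open Matrix

noncomputable section

/-! The residual operator `Q = I − P` is idempotent and self-adjoint for the inner product
`⟨x, y⟩ = xᵀ Σ⁻¹ y`, which yields `Σ⁻¹ (Q Σ Qᵀ) = Qᵀ` and `(Q Σ Qᵀ) Σ⁻¹ = Q`. Since
`ν_j = 0` for `j > s`, the matrix `A` is the pseudo-inverse `V diag(ν)⁺ Vᵀ` of
`M = Q Σ Qᵀ`, so `M A M = M`, and therefore
`Qᵀ A Q = Σ⁻¹ M A M Σ⁻¹ = Σ⁻¹ M Σ⁻¹ = Qᵀ Σ⁻¹ Q`. -/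

namespace Matrix

section NonsingInv

variable {n α : Type*} [Fintype n] [DecidableEq n] [CommRing α]

theorem nonsing_inv_mul_self_mul_nonsing_inv (B : Matrix n n α) : B⁻¹ * B * B⁻¹ = B⁻¹ := by
  rcases nonsing_inv_cancel_or_zero B with ⟨h, -⟩ | h
  · rw [h, Matrix.one_mul]
  · simp [h]

end NonsingInv

section WeightedProjection

variable {n m K : Type*} [Fintype n] [Fintype m] [DecidableEq m] [Field K]

def weightedProjection (W : Matrix n n K) (L : Matrix n m K) : Matrix n n K :=
  L * (Lᵀ * W * L)⁻¹ * Lᵀ * W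

theorem isIdempotentElem_weightedProjection (W : Matrix n n K) (L : Matrix n m K) :
    IsIdempotentElem (weightedProjection W L) := by
  unfold IsIdempotentElem weightedProjection
  calc L * (Lᵀ * W * L)⁻¹ * Lᵀ * W * (L * (Lᵀ * W * L)⁻¹ * Lᵀ * W)
      = L * ((Lᵀ * W * L)⁻¹ * (Lᵀ * W * L) * (Lᵀ * W * L)⁻¹) * Lᵀ * W := by
        simp only [Matrix.mul_assoc]
    _ = L * (Lᵀ * W * L)⁻¹ * Lᵀ * W := by rw [nonsing_inv_mul_self_mul_nonsing_inv]

theorem mul_weightedProjection_eq_transpose_mul {W : Matrix n n K} (hW : W.IsSymm)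
    (L : Matrix n m K) :
    W * weightedProjection W L = (weightedProjection W L)ᵀ * W := by
  simp only [weightedProjection, transpose_mul, transpose_transpose, transpose_nonsing_inv,
    hW.eq, Matrix.mul_assoc]

end WeightedProjection

section Residual

variable {n K : Type*} [Fintype n] [DecidableEq n] [Field K]

theorem mul_one_sub_eq_transpose_mul {W P : Matrix n n K} (h : W * P = Pᵀ * W) :
    W * (1 - P) = (1 - P)ᵀ * W := by
  rw [Matrix.mul_sub, h, transpose_sub, transpose_one, Matrix.sub_mul, Matrix.mul_one,
    Matrix.one_mul]

variable {S Q : Matrix n n K} (hS : IsUnit S.det) (hQ : IsIdempotentElem Q)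
  (hQS : S⁻¹ * Q = Qᵀ * S⁻¹)
include hS hQ hQS

theorem nonsing_inv_mul_mul_mul_transpose : S⁻¹ * (Q * S * Qᵀ) = Qᵀ := by
  calc S⁻¹ * (Q * S * Qᵀ) = S⁻¹ * Q * S * Qᵀ := by simp only [Matrix.mul_assoc]
    _ = Qᵀ * (S⁻¹ * S) * Qᵀ := by rw [hQS, Matrix.mul_assoc Qᵀ]
    _ = Qᵀ := by rw [nonsing_inv_mul S hS, Matrix.mul_one, ← transpose_mul, hQ.eq]

theorem mul_mul_transpose_mul_nonsing_inv : Q * S * Qᵀ * S⁻¹ = Q := by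
  calc Q * S * Qᵀ * S⁻¹ = Q * S * (Qᵀ * S⁻¹) := by rw [Matrix.mul_assoc]
    _ = Q * (S * S⁻¹) * Q := by rw [← hQS]; simp only [Matrix.mul_assoc]
    _ = Q := by rw [mul_nonsing_inv S hS, Matrix.mul_one, hQ.eq]

theorem transpose_mul_mul_eq_of_mul_mul_self {A : Matrix n n K}
    (hA : Q * S * Qᵀ * A * (Q * S * Qᵀ) = Q * S * Qᵀ) :
    Qᵀ * A * Q = Qᵀ * S⁻¹ * Q := by
  have hM := nonsing_inv_mul_mul_mul_transpose hS hQ hQS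
  have hM' := mul_mul_transpose_mul_nonsing_inv hS hQ hQS
  calc Qᵀ * A * Q = S⁻¹ * (Q * S * Qᵀ) * A * (Q * S * Qᵀ * S⁻¹) := by rw [hM, hM']
    _ = S⁻¹ * (Q * S * Qᵀ * A * (Q * S * Qᵀ)) * S⁻¹ := by simp only [Matrix.mul_assoc]
    _ = Qᵀ * S⁻¹ * Q := by
        rw [hA, hM, Matrix.mul_assoc Qᵀ, hQS, ← Matrix.mul_assoc, ← transpose_mul, hQ.eq]

end Residual

section Spectral

theorem submatrix_mul_diagonal_mul_transpose_of_eq_zero {m n k R : Type*} [Fintype n]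
    [Fintype k] [DecidableEq n] [DecidableEq k] [CommSemiring R] (V : Matrix m n R)
    {e : k → n} (he : Function.Injective e) {d : n → R} (hd : ∀ j ∉ Set.range e, d j = 0) :
    V.submatrix id e * diagonal (d ∘ e) * (V.submatrix id e)ᵀ = V * diagonal d * Vᵀ := by
  ext i i'
  rw [mul_apply, mul_apply]
  simp only [mul_diagonal, transpose_apply, submatrix_apply, id_eq, Function.comp_apply]
  exact Fintype.sum_of_injective e he _ _ (fun j hj => by simp [hd j hj]) (fun _ => rfl)

theorem mul_diagonal_inv_mul_self {n K : Type*} [Fintype n] [DecidableEq n] [Field K]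
    {V : Matrix n n K} (hV : Vᵀ * V = 1) (d : n → K) :
    V * diagonal d * Vᵀ * (V * diagonal d⁻¹ * Vᵀ) * (V * diagonal d * Vᵀ) =
      V * diagonal d * Vᵀ := by
  have hd : diagonal d * diagonal d⁻¹ * diagonal d = diagonal d := by
    rw [diagonal_mul_diagonal, diagonal_mul_diagonal]
    exact congrArg diagonal (funext fun j => mul_inv_mul_cancel (d j))
  calc V * diagonal d * Vᵀ * (V * diagonal d⁻¹ * Vᵀ) * (V * diagonal d * Vᵀ)
      = V * diagonal d * (Vᵀ * V) * diagonal d⁻¹ * (Vᵀ * V) * diagonal d * Vᵀ := by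
        simp only [Matrix.mul_assoc]
    _ = V * diagonal d * Vᵀ := by
        rw [hV, Matrix.mul_one, Matrix.mul_one, Matrix.mul_assoc V, Matrix.mul_assoc V, hd]

end Spectral

end Matrix

/-- with `Σ` symmetric positive definite, `L̇` of full rank `p < q`,
`P = L̇(L̇ᵀΣ⁻¹L̇)⁻¹L̇ᵀΣ⁻¹`, `Q = I − P`, a spectral decomposition
`QΣQᵀ = V diag(ν₁ ≥ … ≥ ν_q ≥ 0) Vᵀ`, `s = q − p` (so that `ν_j > 0` for `j ≤ s`
and `ν_j = 0` for `j > s`), and `A = V_s diag(ν₁,…,ν_s)⁻¹ V_sᵀ` with `V_s` the first `s`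
columns of `V`, one has `Qᵀ (Σ⁻¹ − A) Q = 0`. -/
theorem stmt13 {p q : ℕ}
    (Sig : Matrix (Fin q) (Fin q) ℝ) (hSig : Sig.PosDef)
    (Ld : Matrix (Fin q) (Fin p) ℝ)
    (P Q : Matrix (Fin q) (Fin q) ℝ)
    (hP : P = Ld * (Ldᵀ * Sig⁻¹ * Ld)⁻¹ * Ldᵀ * Sig⁻¹)
    (hQ : Q = 1 - P)
    (V : Matrix (Fin q) (Fin q) ℝ) (nu : Fin q → ℝ)
    (hVorth : Vᵀ * V = 1)
    (hdecomp : Q * Sig * Qᵀ = V * Matrix.diagonal nu * Vᵀ)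
    (s : ℕ) (hs : s = q - p)
    (hzero : ∀ j : Fin q, s ≤ (j : ℕ) → nu j = 0)
    (A : Matrix (Fin q) (Fin q) ℝ)
    (hA : A = (V.submatrix id (Fin.castLE (show s ≤ q by omega))) *
      Matrix.diagonal (fun j : Fin s => (nu (Fin.castLE (show s ≤ q by omega) j))⁻¹) *
      (V.submatrix id (Fin.castLE (show s ≤ q by omega)))ᵀ) :
    Qᵀ * (Sig⁻¹ - A) * Q = 0 := by
  obtain rfl : P = weightedProjection Sig⁻¹ Ld := hP
  have hSigSymm : Sig⁻¹.IsSymm := (isHermitian_iff_isSymm.mp hSig.isHermitian).inv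
  have hQidem : IsIdempotentElem Q := by
    rw [hQ]
    exact (isIdempotentElem_weightedProjection _ Ld).one_sub
  have hQsymm : Sig⁻¹ * Q = Qᵀ * Sig⁻¹ := by
    rw [hQ]
    exact mul_one_sub_eq_transpose_mul (mul_weightedProjection_eq_transpose_mul hSigSymm Ld)
  have hA' : A = V * diagonal nu⁻¹ * Vᵀ := by
    rw [hA]
    refine submatrix_mul_diagonal_mul_transpose_of_eq_zero V (Fin.castLE_injective _)
      (d := nu⁻¹) fun j hj => ?_
    have hj : s ≤ j := by simpa [Fin.range_castLE] using hj
    simp [hzero j hj]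
  have hMAM : Q * Sig * Qᵀ * A * (Q * Sig * Qᵀ) = Q * Sig * Qᵀ := by
    rw [hA', hdecomp]
    exact mul_diagonal_inv_mul_self hVorth nu
  rw [Matrix.mul_sub, Matrix.sub_mul, transpose_mul_mul_eq_of_mul_mul_self
    ((isUnit_iff_isUnit_det _).mp hSig.isUnit) hQidem hQsymm hMAM, sub_self]
end
end
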